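/- arXiv:math/0608370 — 4 statements merged into one kernel-verified Lean document; each statement's English description precedes it below -/
import Mathlib

section
/- For any natural number r ≥ 1, the polynomial identity Σ_{j=0}^{r-1} (-1)^j · binomial(r+1, j) · x^j (x+y)^{r-1-j} = Σ_{k=0}^{r-1} (-1)^k (k+1) x^k y^{r-1-k} holds in ℤ[x, y]. -/
open MvPolynomial Finset

private lemma gen_identity {R : Type*} [CommRing R] (x y : R) (r : ℕ) (hr : 1 ≤ r) :
    ∑ j ∈ range r, (-1 : R) ^ j * (((r + 1).choose j : R) *
        (x ^ j * (x + y) ^ (r - 1 - j)))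
      = ∑ k ∈ range r, (-1 : R) ^ k * (((k : R) + 1) *
        (x ^ k * y ^ (r - 1 - k))) := by
  induction r, hr using Nat.le_induction with
  | base => simp
  | succ r hr ih =>
    -- abbreviations
    set S : R := ∑ j ∈ range r, (-1 : R) ^ j * (((r + 1).choose j : R) *
        (x ^ j * (x + y) ^ (r - 1 - j))) with hS
    set T : R := ∑ k ∈ range r, (-1 : R) ^ k * (((k : R) + 1) *
        (x ^ k * y ^ (r - 1 - k))) with hT
    have hsub : ∀ j : ℕ, r + 1 - 1 - j = r - j := fun j => by omega
    -- A : the "middle" sum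
    have hA : ∑ j ∈ range (r + 1), (-1 : R) ^ j * (((r + 1).choose j : R) *
          (x ^ j * (x + y) ^ (r - j)))
        = (x + y) * S + (-1 : R) ^ r * (((r : R) + 1) * x ^ r) := by
      rw [Finset.sum_range_succ, hS, Finset.mul_sum]
      congr 1
      · apply Finset.sum_congr rfl
        intro j hj
        have hj' : j < r := Finset.mem_range.mp hj
        have h1 : r - j = (r - 1 - j) + 1 := by omega
        rw [h1, pow_succ]
        ring
      · rw [Nat.sub_self, Nat.choose_succ_self_right]
        push_cast
        ring
    -- left-hand side recursion
    have hL : ∑ j ∈ range (r + 1), (-1 : R) ^ j * (((r + 2).choose j : R) *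
          (x ^ j * (x + y) ^ (r - j)))
        = y * S + (-1 : R) ^ r * (((r : R) + 1) * x ^ r) := by
      rw [Finset.sum_range_succ']
      have hterm : ∀ i ∈ range r,
          (-1 : R) ^ (i + 1) * (((r + 2).choose (i + 1) : R) *
            (x ^ (i + 1) * (x + y) ^ (r - (i + 1))))
          = -(x * ((-1 : R) ^ i * (((r + 1).choose i : R) *
              (x ^ i * (x + y) ^ (r - 1 - i)))))
            + (-1 : R) ^ (i + 1) * (((r + 1).choose (i + 1) : R) *
              (x ^ (i + 1) * (x + y) ^ (r - (i + 1)))) := by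
        intro i hi
        have h2 : (r + 2).choose (i + 1) = (r + 1).choose i + (r + 1).choose (i + 1) :=
          Nat.choose_succ_succ (r + 1) i
        have h3 : r - (i + 1) = r - 1 - i := by omega
        rw [h2, h3]
        push_cast
        ring
      rw [Finset.sum_congr rfl hterm, Finset.sum_add_distrib, Finset.sum_neg_distrib,
        ← Finset.mul_sum]
      have hback : ∑ i ∈ range r, (-1 : R) ^ (i + 1) * (((r + 1).choose (i + 1) : R) *
            (x ^ (i + 1) * (x + y) ^ (r - (i + 1))))
            + (-1 : R) ^ 0 * (((r + 2).choose 0 : R) * (x ^ 0 * (x + y) ^ (r - 0)))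
          = ∑ j ∈ range (r + 1), (-1 : R) ^ j * (((r + 1).choose j : R) *
            (x ^ j * (x + y) ^ (r - j))) := by
        rw [Finset.sum_range_succ']
        simp
      rw [add_assoc, hback, hA]
      ring
    -- right-hand side recursion
    have hR : ∑ k ∈ range (r + 1), (-1 : R) ^ k * (((k : R) + 1) *
          (x ^ k * y ^ (r - k)))
        = y * T + (-1 : R) ^ r * (((r : R) + 1) * x ^ r) := by
      rw [Finset.sum_range_succ, hT, Finset.mul_sum]
      congr 1
      · apply Finset.sum_congr rfl
        intro k hk
        have hk' : k < r := Finset.mem_range.mp hk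
        have h1 : r - k = (r - 1 - k) + 1 := by omega
        rw [h1, pow_succ]
        ring
      · rw [Nat.sub_self]
        ring
    simp only [hsub]
    have e2 : ((r + 1 : ℕ) + 1).choose = (r + 2).choose := by norm_num
    calc ∑ j ∈ range (r + 1), (-1 : R) ^ j * (((r + 1 + 1).choose j : R) *
          (x ^ j * (x + y) ^ (r - j)))
        = ∑ j ∈ range (r + 1), (-1 : R) ^ j * (((r + 2).choose j : R) *
          (x ^ j * (x + y) ^ (r - j))) := by rw [e2]
      _ = y * S + (-1 : R) ^ r * (((r : R) + 1) * x ^ r) := hL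
      _ = y * T + (-1 : R) ^ r * (((r : R) + 1) * x ^ r) := by rw [hS, hT] at *; rw [ih]
      _ = ∑ k ∈ range (r + 1), (-1 : R) ^ k * (((k : R) + 1) * (x ^ k * y ^ (r - k))) :=
          hR.symm

/-- For r ≥ 1, in ℤ[x,y]:
    Σ_{j=0}^{r-1} (-1)^j C(r+1,j) x^j (x+y)^{r-1-j} = Σ_{k=0}^{r-1} (-1)^k (k+1) x^k y^{r-1-k}. -/
theorem stmt_2 (r : ℕ) (hr : 1 ≤ r) :
    ∑ j ∈ range r, (-1 : MvPolynomial (Fin 2) ℤ) ^ j * ((r + 1).choose j : ℤ) •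
        (X 0 ^ j * (X 0 + X 1) ^ (r - 1 - j))
      = ∑ k ∈ range r, (-1 : MvPolynomial (Fin 2) ℤ) ^ k * ((k : ℤ) + 1) •
        (X 0 ^ k * X 1 ^ (r - 1 - k)) := by
  have := gen_identity (X 0 : MvPolynomial (Fin 2) ℤ) (X 1) r hr
  simpa [zsmul_eq_mul] using this
end

section
/- Let r ≥ 1 and let R = ℤ[x, y]/(x^{r+1}, y^{r+1}), with ε : R → ℤ extracting the coefficient of x^r y^r. Let l₁, l₂, l₃ be integers with 1 ≤ lᵢ ≤ r and l₁ + l₂ + l₃ = 2r + 1. Then ε( x^{l₁} · (x^{l₂} - (-y)^{l₂}) · Σ_{j=0}^{l₃-1} x^{l₃-1-j} (-y)^j ) = (-1)^r. -/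
open MvPolynomial Finset

/-- In `R = ℤ[x,y]/(x^{r+1}, y^{r+1})`, the functional ε extracting the coefficient of
`x^r y^r`, with the sign convention absorbing the factor `E ~ -(x+y)` (i.e. the overall
minus sign of the paper's computation): on representatives of total degree `2r` it is
minus the coefficient of the monomial `x^r y^r` in `ℤ[x,y]`. -/
noncomputable def eps4 (r : ℕ) (p : MvPolynomial (Fin 2) ℤ) : ℤ :=
  -(MvPolynomial.coeff (Finsupp.single 0 r + Finsupp.single 1 r) p)

/-- for 1 ≤ lᵢ ≤ r, l₁+l₂+l₃ = 2r+1,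
ε( x^{l₁} (x^{l₂} - (-y)^{l₂}) Σ_{j=0}^{l₃-1} x^{l₃-1-j}(-y)^j ) = (-1)^r. -/
theorem stmt_4 (r l₁ l₂ l₃ : ℕ) (hr : 1 ≤ r)
    (h1 : 1 ≤ l₁) (h1' : l₁ ≤ r) (h2 : 1 ≤ l₂) (h2' : l₂ ≤ r) (h3 : 1 ≤ l₃) (h3' : l₃ ≤ r)
    (hsum : l₁ + l₂ + l₃ = 2 * r + 1) :
    eps4 r (X 0 ^ l₁ * (X 0 ^ l₂ - (-X 1) ^ l₂) *
        ∑ j ∈ range l₃, X 0 ^ (l₃ - 1 - j) * (-X 1) ^ j)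
      = (-1 : ℤ) ^ r := by
  have key : ∀ a b : ℕ, MvPolynomial.coeff (Finsupp.single 0 r + Finsupp.single 1 r)
      ((X 0 : MvPolynomial (Fin 2) ℤ) ^ a * X 1 ^ b) = if a = r ∧ b = r then 1 else 0 := by
    intro a b
    rw [X_pow_eq_monomial, X_pow_eq_monomial, monomial_mul, coeff_monomial, one_mul]
    by_cases h : a = r ∧ b = r
    · obtain ⟨rfl, rfl⟩ := h
      simp
    · rw [if_neg, if_neg h]
      intro he
      apply h
      constructor
      · have := DFunLike.congr_fun he 0
        simpa [Finsupp.single_apply] using this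
      · have := DFunLike.congr_fun he 1
        simpa [Finsupp.single_apply] using this
  unfold eps4
  rw [Finset.mul_sum, MvPolynomial.coeff_sum]
  have hterm : ∀ j ∈ range l₃,
      MvPolynomial.coeff (Finsupp.single 0 r + Finsupp.single 1 r)
        ((X 0 : MvPolynomial (Fin 2) ℤ) ^ l₁ * (X 0 ^ l₂ - (-X 1) ^ l₂) *
          (X 0 ^ (l₃ - 1 - j) * (-X 1) ^ j))
      = if j = r - l₂ then -(-1 : ℤ) ^ r else 0 := by
    intro j hj
    rw [Finset.mem_range] at hj
    have expand : ((X 0 : MvPolynomial (Fin 2) ℤ) ^ l₁ * (X 0 ^ l₂ - (-X 1) ^ l₂) *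
          (X 0 ^ (l₃ - 1 - j) * (-X 1) ^ j))
        = C ((-1 : ℤ) ^ j) * (X 0 ^ (l₁ + l₂ + (l₃ - 1 - j)) * X 1 ^ j)
          - C ((-1 : ℤ) ^ (l₂ + j)) * (X 0 ^ (l₁ + (l₃ - 1 - j)) * X 1 ^ (l₂ + j)) := by
      rw [map_pow, map_pow, map_neg, map_one]
      ring
    rw [expand, coeff_sub, coeff_C_mul, coeff_C_mul, key, key]
    have hjr : j ≠ r := by omega
    rw [if_neg (fun h => hjr h.2)]
    by_cases hj2 : j = r - l₂
    · subst hj2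
      have e1 : l₂ + (r - l₂) = r := by omega
      have e2 : l₁ + (l₃ - 1 - (r - l₂)) = r := by omega
      rw [e1, e2, if_pos ⟨rfl, rfl⟩, if_pos rfl]
      ring
    · rw [if_neg (fun h => hj2 (by omega)), if_neg hj2]
      ring
  rw [Finset.sum_congr rfl hterm, Finset.sum_ite_eq' (range l₃) (r - l₂)
    (fun _ => -(-1 : ℤ) ^ r), if_pos (Finset.mem_range.mpr (by omega)), neg_neg]
end

section
/- Let r ≥ 1 and d ≥ 1. The coefficient of z^{-(k+2)} in the Laurent expansion (in 1/z) of (-1)^{(d-1)(r+1)} · d^{-(r+1)} z^{-(r+1)} · Σ_{m≥0} binomial(-(r+1), m) (h/(dz))^m · h^l, evaluated by taking the coefficient of h^r (i.e., integrating h^l·(h+dz)^{-(r+1)} over ℙ^r), equals (-1)^{d(r+1)+k}/d^{k+2} · binomial(k+1, r) when k = 2r - 1 - l and 1 ≤ l ≤ r, and equals 0 for all other values of k ≥ 0. -/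
open Finset

/-- The generalized (falling-factorial) binomial coefficient
`binom(a, m) = a(a-1)⋯(a-m+1)/m!`. -/
noncomputable def genBinom (a : ℚ) (m : ℕ) : ℚ :=
  (∏ i ∈ range m, (a - i)) / m.factorial

/-- The coefficient of `z^{-(k+2)} h^r` in the Laurent expansion
`(-1)^{(d-1)(r+1)} d^{-(r+1)} z^{-(r+1)} Σ_{m≥0} binom(-(r+1), m) (h/(dz))^m · h^l`
(modulo `h^{r+1}`): the term `m` contributes `h^{l+m} z^{-(r+1)-m}`, so only
`m = k+2-(r+1)` with `l + m = r` can contribute. -/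
noncomputable def oneptCoeff (r d l k : ℕ) : ℚ :=
  if r + 1 ≤ k + 2 ∧ l + (k + 2 - (r + 1)) = r then
    (-1 : ℚ) ^ ((d - 1) * (r + 1)) * (1 / (d : ℚ)) ^ (r + 1) *
      genBinom (-(r + 1 : ℚ)) (k + 2 - (r + 1)) * (1 / (d : ℚ)) ^ (k + 2 - (r + 1))
  else 0

/-! Only the term `m = r - l` of the expansion survives the truncation, and
`binom(-(r+1), m) = (-1)^m C(r+m, m)`; the signs and powers of `d` then combine
because `(d-1)(r+1) + m` and `d(r+1) + k` differ by the even number `2r`. -/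

theorem genBinom_neg_natCast_add_one (r m : ℕ) :
    genBinom (-(r + 1 : ℚ)) m = (-1) ^ m * ((r + m).choose m : ℚ) := by
  have hprod :
      ∏ i ∈ range m, (-(r + 1 : ℚ) - i) = (-1) ^ m * ((r + 1).ascFactorial m : ℚ) :=
    calc ∏ i ∈ range m, (-(r + 1 : ℚ) - i) = ∏ i ∈ range m, -((r + 1 + i : ℕ) : ℚ) :=
          prod_congr rfl fun i _ => by push_cast; ring
      _ = (-1) ^ m * ((r + 1).ascFactorial m : ℚ) := by
          rw [prod_neg, card_range, Nat.ascFactorial_eq_prod_range, Nat.cast_prod]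
  rw [genBinom, hprod, Nat.ascFactorial_eq_factorial_mul_choose]
  push_cast
  field_simp

theorem neg_one_pow_mul_genBinom_eq_choose {d r m k : ℕ} (hd : 1 ≤ d) (hk : k + 1 = r + m) :
    (-1 : ℚ) ^ ((d - 1) * (r + 1)) * (1 / (d : ℚ)) ^ (r + 1) *
      genBinom (-(r + 1 : ℚ)) m * (1 / (d : ℚ)) ^ m
      = (-1 : ℚ) ^ (d * (r + 1) + k) / (d : ℚ) ^ (k + 2) * ((k + 1).choose r : ℚ) := by
  have hsign : (-1 : ℚ) ^ (d * (r + 1) + k) = (-1) ^ ((d - 1) * (r + 1)) * (-1) ^ m := by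
    obtain ⟨n, rfl⟩ := Nat.exists_eq_add_of_le' hd
    have hexp : (n + 1) * (r + 1) + k = n * (r + 1) + m + 2 * r := by
      rw [add_one_mul]; omega
    rw [hexp, Nat.add_sub_cancel]
    simp [pow_add, pow_mul]
  rw [genBinom_neg_natCast_add_one, hsign, hk, Nat.choose_symm_add,
    show k + 2 = r + 1 + m by omega, div_eq_mul_one_div _ ((d : ℚ) ^ _), ← one_div_pow,
    pow_add, pow_add]
  ring

theorem stmt_15_general (r d l : ℕ) (hr : 1 ≤ r) (hd : 1 ≤ d) (hl' : l ≤ r) :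
    ∀ k : ℕ, oneptCoeff r d l k
      = if k = 2 * r - 1 - l then
          (-1 : ℚ) ^ (d * (r + 1) + k) / (d : ℚ) ^ (k + 2) * ((k + 1).choose r : ℚ)
        else 0 := by
  intro k
  unfold oneptCoeff
  split_ifs with hcond hk hk
  · exact neg_one_pow_mul_genBinom_eq_choose hd (by omega)
  · omega
  · omega
  · rfl

/-- the coefficient equals `(-1)^{d(r+1)+k}/d^{k+2} · C(k+1, r)` when
`k = 2r - 1 - l` (with `1 ≤ l ≤ r`), and `0` for all other `k`. -/
theorem stmt_15 (r d l : ℕ) (hr : 1 ≤ r) (hd : 1 ≤ d) (hl : 1 ≤ l) (hl' : l ≤ r) :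
    ∀ k : ℕ, oneptCoeff r d l k
      = if k = 2 * r - 1 - l then
          (-1 : ℚ) ^ (d * (r + 1) + k) / (d : ℚ) ^ (k + 2) * ((k + 1).choose r : ℚ)
        else 0 :=
  stmt_15_general r d l hr hd hl'
end

section
/- Let r ≥ 1 and work in the ring ℤ[x, y]/(x^{r+1}, y^{r+1}). For α a homogeneous class of degree l with 1 ≤ l ≤ r (represented by the relation that intersecting with x^p y^q for p + q = 2r - l recovers intersection numbers), the element e = Σ_{k=1}^{l} (-1)^{k-1} x^{l-k} y^{k-1} is the unique element of the span of {x^{l-1}, x^{l-2}y, ..., y^{l-1}} satisfying: for every p, q ≥ 0 with p + q = 2r - l and q ≥ r - l + 1, the coefficient of x^r y^r in e·(x+y)·x^p y^q equals δ_{q,r} (i.e., 1 if q = r and 0 if r - l + 1 ≤ q ≤ r - 1). -/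
open MvPolynomial Finset

lemma coeff_CXX (c : ℤ) (u v m n : ℕ) :
    MvPolynomial.coeff (Finsupp.single 0 m + Finsupp.single 1 n)
      ((C c * X 0 ^ u * X 1 ^ v) : MvPolynomial ℕ ℤ) =
      if u = m ∧ v = n then c else 0 := by
  rw [mul_assoc, X_pow_eq_monomial, X_pow_eq_monomial, monomial_mul, one_mul,
    C_mul_monomial, mul_one, coeff_monomial]
  have key : (Finsupp.single 0 u + Finsupp.single 1 v
      = (Finsupp.single 0 m + Finsupp.single 1 n : ℕ →₀ ℕ)) ↔ (u = m ∧ v = n) := by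
    constructor
    · intro h
      constructor
      · simpa using DFunLike.congr_fun h 0
      · simpa using DFunLike.congr_fun h 1
    · rintro ⟨rfl, rfl⟩; rfl
  simp [key, eq_comm]

lemma key_coeff (r l p q : ℕ) (hl : 1 ≤ l) (hlr : l ≤ r) (hpq : p + q = 2 * r - l)
    (hq : r - l + 1 ≤ q) (a : ℕ → ℤ) :
    MvPolynomial.coeff (Finsupp.single 0 r + Finsupp.single 1 r)
      ((∑ k ∈ range l, MvPolynomial.C (a k) * X 0 ^ (l - 1 - k) * X 1 ^ k) *
          (X 0 + X 1) * X 0 ^ p * X 1 ^ q)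
    = if q ≤ r then a (r - q) + (if r - q = 0 then 0 else a (r - q - 1)) else 0 := by
  rw [Finset.sum_mul, Finset.sum_mul, Finset.sum_mul, MvPolynomial.coeff_sum]
  have hterm : ∀ k, (C (a k) * X 0 ^ (l - 1 - k) * X 1 ^ k * (X 0 + X 1) * X 0 ^ p * X 1 ^ q
      : MvPolynomial ℕ ℤ)
      = C (a k) * X 0 ^ (l - 1 - k + 1 + p) * X 1 ^ (k + q)
        + C (a k) * X 0 ^ (l - 1 - k + p) * X 1 ^ (k + 1 + q) := by
    intro k; ring
  have hsum : ∀ k ∈ range l,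
      MvPolynomial.coeff (Finsupp.single 0 r + Finsupp.single 1 r)
        ((C (a k) * X 0 ^ (l - 1 - k) * X 1 ^ k * (X 0 + X 1) * X 0 ^ p * X 1 ^ q)
          : MvPolynomial ℕ ℤ)
      = (if l - 1 - k + 1 + p = r ∧ k + q = r then a k else 0)
        + (if l - 1 - k + p = r ∧ k + 1 + q = r then a k else 0) := by
    intro k _
    rw [hterm k, MvPolynomial.coeff_add, coeff_CXX, coeff_CXX]
  rw [Finset.sum_congr rfl hsum, Finset.sum_add_distrib]
  by_cases hqr : q ≤ r
  · rw [if_pos hqr]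
    have h1 : (∑ k ∈ range l, if l - 1 - k + 1 + p = r ∧ k + q = r then a k else 0)
        = a (r - q) := by
      rw [Finset.sum_eq_single (r - q)]
      · rw [if_pos ⟨by omega, by omega⟩]
      · intro k hk hne
        rw [Finset.mem_range] at hk
        rw [if_neg]; rintro ⟨h1, h2⟩; omega
      · intro h; exact absurd (Finset.mem_range.mpr (by omega)) h
    have h2 : (∑ k ∈ range l, if l - 1 - k + p = r ∧ k + 1 + q = r then a k else 0)
        = if r - q = 0 then 0 else a (r - q - 1) := by
      by_cases hm : r - q = 0
      · rw [if_pos hm, Finset.sum_eq_zero]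
        intro k hk
        rw [if_neg]; rintro ⟨h1, h2⟩; omega
      · rw [if_neg hm, Finset.sum_eq_single (r - q - 1)]
        · rw [if_pos ⟨by omega, by omega⟩]
        · intro k hk hne
          rw [Finset.mem_range] at hk
          rw [if_neg]; rintro ⟨h1, h2⟩; omega
        · intro h; exact absurd (Finset.mem_range.mpr (by omega)) h
    rw [h1, h2]
  · rw [if_neg hqr]
    rw [Finset.sum_eq_zero, Finset.sum_eq_zero, add_zero]
    · intro k hk; rw [if_neg]; rintro ⟨h1, h2⟩; omega
    · intro k hk; rw [if_neg]; rintro ⟨h1, h2⟩; omega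

/-- in `ℤ[x,y]/(x^{r+1}, y^{r+1})`, an element
`e = Σ_{k=0}^{l-1} a_k x^{l-1-k} y^k` of the span of `{x^{l-1}, x^{l-2}y, …, y^{l-1}}`
satisfies: for every `p, q ≥ 0` with `p + q = 2r - l` and `q ≥ r - l + 1`, the
coefficient of `x^r y^r` in `e·(x+y)·x^p y^q` equals `δ_{q,r}`, if and only if
`a_k = (-1)^k` for all `k < l`, i.e. `e = Σ_{k=1}^{l} (-1)^{k-1} x^{l-k} y^{k-1}` is the
unique such element.  (All the products have total degree `2r`, so the coefficient of
`x^r y^r` is the same computed in `ℤ[x,y]` or in the quotient.) -/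
theorem stmt_17 (r l : ℕ) (hr : 1 ≤ r) (hl : 1 ≤ l) (hl' : l ≤ r) (a : ℕ → ℤ) :
    (∀ p q : ℕ, p + q = 2 * r - l → r - l + 1 ≤ q →
        MvPolynomial.coeff (Finsupp.single 0 r + Finsupp.single 1 r)
          ((∑ k ∈ range l, MvPolynomial.C (a k) * X 0 ^ (l - 1 - k) * X 1 ^ k) *
              (X 0 + X 1) * X 0 ^ p * X 1 ^ q)
          = if q = r then 1 else 0)
    ↔ ∀ k < l, a k = (-1 : ℤ) ^ k := by
  constructor
  · intro H k hk
    induction k with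
    | zero =>
      have h0 := H (r - l) r (by omega) (by omega)
      rw [key_coeff r l (r - l) r hl hl' (by omega) (by omega)] at h0
      simp only [le_refl, if_pos, Nat.sub_self, if_true, add_zero] at h0
      simpa using h0
    | succ n ih =>
      have hnl : n < l := by omega
      have hn := ih hnl
      have h1 := H (r - l + n + 1) (r - (n + 1)) (by omega) (by omega)
      rw [key_coeff r l (r - l + n + 1) (r - (n + 1)) hl hl' (by omega) (by omega)] at h1
      have e1 : r - (r - (n + 1)) = n + 1 := by omega
      have e2 : ¬ (r - (n + 1) = r) := by omega
      rw [if_pos (by omega : r - (n + 1) ≤ r), e1, if_neg e2,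
        if_neg (by omega : ¬ (n + 1 = 0))] at h1
      simp only [Nat.add_sub_cancel] at h1
      rw [hn] at h1
      have : a (n + 1) = -(-1 : ℤ) ^ n := by linarith
      rw [this, pow_succ]; ring
  · intro h p q hpq hq
    rw [key_coeff r l p q hl hl' hpq hq]
    by_cases hqr : q ≤ r
    · rw [if_pos hqr]
      by_cases hqe : q = r
      · subst hqe
        rw [if_pos rfl, Nat.sub_self, if_pos rfl, add_zero, h 0 (by omega)]
        simp
      · rw [if_neg hqe, if_neg (by omega : ¬ (r - q = 0)),
          h (r - q) (by omega), h (r - q - 1) (by omega)]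
        obtain ⟨m, hm⟩ : ∃ m, r - q = m + 1 := ⟨r - q - 1, by omega⟩
        rw [hm, Nat.add_sub_cancel, pow_succ]; ring
    · rw [if_neg hqr, if_neg (by omega : ¬ (q = r))]
end
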